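/- Let X and Y be n×n positive semidefinite complex matrices and let I be the identity matrix. Then for every index j, λ_j↓((X + I)⁻¹ − (X + Y + I)⁻¹) ≤ λ_j↓(I − (Y + I)⁻¹). Equivalently, with f(x) = x/(x+1), one has λ_j↓(f(X + Y) − f(X)) ≤ λ_j↓(f(Y)) for all j. -/

import Mathlib

open Matrix
open scoped ComplexOrder

/-- The eigenvalues of a square matrix, sorted in non-increasing order
(junk value `0` if the matrix is not Hermitian). -/
noncomputable def eigValsDown {𝕜 : Type*} [RCLike 𝕜] {n : ℕ}
    (A : Matrix (Fin n) (Fin n) 𝕜) : Fin n → ℝ :=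
  if hA : A.IsHermitian then
    fun k => (hA.eigenvalues ∘ Tuple.sort hA.eigenvalues) k.rev
  else 0

/-- Functional calculus: apply a real function to a Hermitian matrix via its spectral
decomposition (junk value `0` if the matrix is not Hermitian). -/
noncomputable def matFun {𝕜 : Type*} [RCLike 𝕜] {n : ℕ} (h : ℝ → ℝ)
    (A : Matrix (Fin n) (Fin n) 𝕜) : Matrix (Fin n) (Fin n) 𝕜 :=
  if hA : A.IsHermitian then
    (hA.eigenvectorUnitary : Matrix (Fin n) (Fin n) 𝕜) *
      Matrix.diagonal (fun i => (h (hA.eigenvalues i) : 𝕜)) *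
      star (hA.eigenvectorUnitary : Matrix (Fin n) (Fin n) 𝕜)
  else 0

/-- The operator norm (largest singular value) of a matrix. -/
noncomputable def opNorm {𝕜 : Type*} [RCLike 𝕜] {n : ℕ}
    (A : Matrix (Fin n) (Fin n) 𝕜) : ℝ :=
  ‖Matrix.toEuclideanCLM (𝕜 := 𝕜) A‖

/-- The matrix absolute value `|M| = (Mᴴ M)^(1/2)`. -/
noncomputable def matAbs {𝕜 : Type*} [RCLike 𝕜] {n : ℕ}
    (A : Matrix (Fin n) (Fin n) 𝕜) : Matrix (Fin n) (Fin n) 𝕜 :=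
  (Matrix.posSemidef_conjTranspose_mul_self A).1.eigenvectorUnitary.1 *
    diagonal ((↑) ∘ (√·) ∘ (Matrix.posSemidef_conjTranspose_mul_self A).1.eigenvalues) *
    (star (Matrix.posSemidef_conjTranspose_mul_self A).1.eigenvectorUnitary : Matrix (Fin n) (Fin n) 𝕜)

/-- The Ky Fan `k`-norm: the sum of the `k` largest singular values. -/
noncomputable def kyFanNorm {𝕜 : Type*} [RCLike 𝕜] {n : ℕ} (k : ℕ)
    (A : Matrix (Fin n) (Fin n) 𝕜) : ℝ :=
  ∑ j ∈ Finset.univ.filter (fun j : Fin n => (j : ℕ) < k), eigValsDown (matAbs A) j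

/-!
Let `C = √(X + 1)` and `Z = C⁻¹ Y C⁻¹`. Then
`(X + 1)⁻¹ - (X + Y + 1)⁻¹ = C⁻¹ (1 - (Z + 1)⁻¹) C⁻¹`, and `C⁻¹` is an invertible contraction
because `C² ≥ 1`. By the Courant–Fischer min-max principle, conjugating a positive semidefinite
matrix by such a contraction can only lower each `λ_j↓`. Applying this twice, with the
increasing function `f r = 1 - (r + 1)⁻¹`,
`λ_j↓((X + 1)⁻¹ - (X + Y + 1)⁻¹) ≤ λ_j↓(f Z) = f (λ_j↓ Z) ≤ f (λ_j↓ Y) = λ_j↓(f Y)`.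
-/

open Module Polynomial

lemma Antitone.eq_of_map_univ_eq {α : Type*} [LinearOrder α] {n : ℕ} {u v : Fin n → α}
    (hu : Antitone u) (hv : Antitone v)
    (h : Finset.univ.val.map u = Finset.univ.val.map v) : u = v := by
  refine List.ofFn_injective (List.Perm.eq_of_sortedGE hu.sortedGE_ofFn hv.sortedGE_ofFn ?_)
  rwa [← Multiset.coe_eq_coe, ← Fin.univ_val_map, ← Fin.univ_val_map]

lemma Submodule.exists_ne_zero_mem_inf_of_finrank_lt {K V : Type*} [DivisionRing K]
    [AddCommGroup V] [Module K V] [FiniteDimensional K V] {s t : Submodule K V}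
    (h : finrank K V < finrank K s + finrank K t) : ∃ x ∈ s, x ∈ t ∧ x ≠ 0 := by
  by_contra! hst
  exact h.not_ge (finrank_add_finrank_le_of_disjoint (disjoint_def.mpr hst))

section MinMax

variable {𝕜 E : Type*} [RCLike 𝕜] [NormedAddCommGroup E] [InnerProductSpace 𝕜 E]

namespace OrthonormalBasis

variable {ι : Type*} [Fintype ι] (b : OrthonormalBasis ι 𝕜 E)

lemma repr_eq_zero_of_mem_span_image {s : Set ι} {x : E}
    (hx : x ∈ Submodule.span 𝕜 (b '' s)) {i : ι} (hi : i ∉ s) : b.repr x i = 0 := by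
  rw [← OrthonormalBasis.coe_toBasis, b.toBasis.mem_span_image] at hx
  rw [← b.coe_toBasis_repr_apply]
  by_contra h
  exact hi (hx (Finsupp.mem_support_iff.mpr h))

lemma finrank_span_image (s : Finset ι) :
    finrank 𝕜 (Submodule.span 𝕜 (b '' s)) = s.card := by
  rw [Set.image_eq_range]
  exact (finrank_span_eq_card
    (b.orthonormal.comp _ Subtype.val_injective).linearIndependent).trans (Fintype.card_coe s)

end OrthonormalBasis

namespace LinearMap.IsSymmetric

variable [FiniteDimensional 𝕜 E] {n : ℕ} (hn : finrank 𝕜 E = n)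

lemma re_inner_map_self_eq_sum {T : E →ₗ[𝕜] E} (hT : T.IsSymmetric) (x : E) :
    RCLike.re (inner 𝕜 x (T x)) =
      ∑ i, hT.eigenvalues hn i * ‖(hT.eigenvectorBasis hn).repr x i‖ ^ 2 := by
  rw [← (hT.eigenvectorBasis hn).repr.inner_map_map, PiLp.inner_apply, map_sum]
  refine Finset.sum_congr rfl fun i _ => ?_
  rw [eigenvectorBasis_apply_self_apply, RCLike.inner_apply, mul_assoc,
    RCLike.mul_conj, ← RCLike.ofReal_pow, ← RCLike.ofReal_mul, RCLike.ofReal_re]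

lemma mul_norm_sq_le_re_inner_of_mem_span {T : E →ₗ[𝕜] E} (hT : T.IsSymmetric)
    {s : Set (Fin n)} {c : ℝ} (hc : ∀ i ∈ s, c ≤ hT.eigenvalues hn i) {x : E}
    (hx : x ∈ Submodule.span 𝕜 (hT.eigenvectorBasis hn '' s)) :
    c * ‖x‖ ^ 2 ≤ RCLike.re (inner 𝕜 x (T x)) := by
  rw [hT.re_inner_map_self_eq_sum hn, ← (hT.eigenvectorBasis hn).repr.norm_map,
    EuclideanSpace.norm_sq_eq, Finset.mul_sum]
  refine Finset.sum_le_sum fun i _ => ?_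
  by_cases hi : i ∈ s
  · exact mul_le_mul_of_nonneg_right (hc i hi) (sq_nonneg _)
  · simp [(hT.eigenvectorBasis hn).repr_eq_zero_of_mem_span_image hx hi]

lemma re_inner_le_mul_norm_sq_of_mem_span {T : E →ₗ[𝕜] E} (hT : T.IsSymmetric)
    {s : Set (Fin n)} {c : ℝ} (hc : ∀ i ∈ s, hT.eigenvalues hn i ≤ c) {x : E}
    (hx : x ∈ Submodule.span 𝕜 (hT.eigenvectorBasis hn '' s)) :
    RCLike.re (inner 𝕜 x (T x)) ≤ c * ‖x‖ ^ 2 := by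
  rw [hT.re_inner_map_self_eq_sum hn, ← (hT.eigenvectorBasis hn).repr.norm_map,
    EuclideanSpace.norm_sq_eq, Finset.mul_sum]
  refine Finset.sum_le_sum fun i _ => ?_
  by_cases hi : i ∈ s
  · exact mul_le_mul_of_nonneg_right (hc i hi) (sq_nonneg _)
  · simp [(hT.eigenvectorBasis hn).repr_eq_zero_of_mem_span_image hx hi]

lemma exists_finrank_eq_eigenvalues_mul_le {T : E →ₗ[𝕜] E} (hT : T.IsSymmetric) (j : Fin n) :
    ∃ V : Submodule 𝕜 E, finrank 𝕜 V = j + 1 ∧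
      ∀ x ∈ V, hT.eigenvalues hn j * ‖x‖ ^ 2 ≤ RCLike.re (inner 𝕜 x (T x)) :=
  ⟨_, (hT.eigenvectorBasis hn).finrank_span_image (Finset.Iic j) |>.trans (Fin.card_Iic j),
    fun _ => hT.mul_norm_sq_le_re_inner_of_mem_span hn fun _ hi =>
      hT.eigenvalues_antitone hn (Finset.mem_Iic.mp hi)⟩

lemma exists_finrank_eq_le_eigenvalues_mul {T : E →ₗ[𝕜] E} (hT : T.IsSymmetric) (j : Fin n) :
    ∃ W : Submodule 𝕜 E, finrank 𝕜 W = n - j ∧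
      ∀ x ∈ W, RCLike.re (inner 𝕜 x (T x)) ≤ hT.eigenvalues hn j * ‖x‖ ^ 2 :=
  ⟨_, (hT.eigenvectorBasis hn).finrank_span_image (Finset.Ici j) |>.trans (Fin.card_Ici j),
    fun _ => hT.re_inner_le_mul_norm_sq_of_mem_span hn fun _ hi =>
      hT.eigenvalues_antitone hn (Finset.mem_Ici.mp hi)⟩

theorem eigenvalues_le_of_eq_adjoint_comp {S T K : E →ₗ[𝕜] E} (hT : T.IsSymmetric)
    (hS : S.IsPositive) (hK : Function.Injective K) (hK_le : ∀ x, ‖K x‖ ≤ ‖x‖)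
    (hTS : T = K.adjoint ∘ₗ S ∘ₗ K) (j : Fin n) :
    hT.eigenvalues hn j ≤ hS.isSymmetric.eigenvalues hn j := by
  obtain ⟨V, hV, hTV⟩ := hT.exists_finrank_eq_eigenvalues_mul_le hn j
  obtain ⟨W, hW, hSW⟩ := hS.isSymmetric.exists_finrank_eq_le_eigenvalues_mul hn j
  have hKV : finrank 𝕜 (V.map K) = j + 1 :=
    (LinearEquiv.finrank_eq (Submodule.equivMapOfInjective K hK V)).symm.trans hV
  obtain ⟨_, ⟨x, hxV, rfl⟩, hKxW, hKx⟩ :=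
    Submodule.exists_ne_zero_mem_inf_of_finrank_lt (s := V.map K) (t := W) (by omega)
  have hx : 0 < ‖x‖ ^ 2 := by
    have : x ≠ 0 := by rintro rfl; exact hKx (map_zero K)
    positivity
  have hSj := hS.nonneg_eigenvalues hn j
  refine le_of_mul_le_mul_right ?_ hx
  calc hT.eigenvalues hn j * ‖x‖ ^ 2 ≤ RCLike.re (inner 𝕜 x (T x)) := hTV x hxV
    _ = RCLike.re (inner 𝕜 (K x) (S (K x))) := by
        rw [hTS, comp_apply, comp_apply, adjoint_inner_right]
    _ ≤ hS.isSymmetric.eigenvalues hn j * ‖K x‖ ^ 2 := hSW _ hKxW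
    _ ≤ hS.isSymmetric.eigenvalues hn j * ‖x‖ ^ 2 := by gcongr; exact hK_le x

end LinearMap.IsSymmetric

end MinMax

namespace Matrix

open scoped MatrixOrder

variable {𝕜 : Type*} [RCLike 𝕜]

lemma inv_sub_inv_add_eq_mul_mul {ι α : Type*} [Fintype ι] [DecidableEq ι] [CommRing α]
    {A B C : Matrix ι ι α} (hC : IsUnit C) (hCC : C * C = A) :
    A⁻¹ - (A + B)⁻¹ = C⁻¹ * (1 - (C⁻¹ * B * C⁻¹ + 1)⁻¹) * C⁻¹ := by
  have hdet := (isUnit_iff_isUnit_det C).mp hC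
  have hAB : A + B = C * (C⁻¹ * B * C⁻¹ + 1) * C := by
    simp only [mul_add, add_mul, mul_one, hCC, ← mul_assoc, mul_nonsing_inv C hdet, one_mul]
    rw [mul_assoc, nonsing_inv_mul C hdet, mul_one, add_comm]
  rw [hAB, ← hCC, mul_inv_rev, mul_inv_rev, mul_inv_rev, mul_sub, sub_mul, mul_one]
  simp only [mul_assoc]

lemma PosDef.exists_isUnit_posSemidef_mul_self_eq {ι : Type*} [Fintype ι] [DecidableEq ι]
    {A : Matrix ι ι 𝕜} (hA : A.PosDef) :
    ∃ C : Matrix ι ι 𝕜, C.PosSemidef ∧ IsUnit C ∧ C * C = A :=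
  ⟨CFC.sqrt A, nonneg_iff_posSemidef.mp (CFC.sqrt_nonneg A),
    (CFC.isUnit_sqrt_iff A hA.posSemidef.nonneg).mpr hA.isUnit,
    CFC.sqrt_mul_sqrt_self A hA.posSemidef.nonneg⟩

lemma norm_toEuclideanLin_inv_le {ι : Type*} [Fintype ι] [DecidableEq ι]
    {C : Matrix ι ι 𝕜} (hC : IsUnit C) (h : (Cᴴ * C - 1).PosSemidef)
    (x : EuclideanSpace 𝕜 ι) : ‖toEuclideanLin C⁻¹ x‖ ≤ ‖x‖ := by
  set y := toEuclideanLin C⁻¹ x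
  have hy : toEuclideanLin C y = x := by
    rw [← LinearMap.comp_apply, ← toLpLin_mul_same,
      mul_nonsing_inv _ ((isUnit_iff_isUnit_det C).mp hC), toLpLin_one, LinearMap.id_apply]
  have hpos := (isPositive_toEuclideanLin_iff.mpr h).re_inner_nonneg_right y
  rw [map_sub, toLpLin_mul_same, toLpLin_one, LinearMap.sub_apply, LinearMap.comp_apply,
    toEuclideanLin_conjTranspose_eq_adjoint, inner_sub_right, LinearMap.adjoint_inner_right,
    hy, map_sub] at hpos
  simp only [LinearMap.id_apply, inner_self_eq_norm_sq_to_K, ← RCLike.ofReal_pow,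
    RCLike.ofReal_re, sub_nonneg] at hpos
  exact (pow_le_pow_iff_left₀ (norm_nonneg _) (norm_nonneg _) two_ne_zero).mp hpos

variable {n : ℕ} {A : Matrix (Fin n) (Fin n) 𝕜}

namespace IsHermitian

lemma eigValsDown_eq_comp (hA : A.IsHermitian) :
    eigValsDown A = hA.eigenvalues ∘ (Fin.revPerm.trans (Tuple.sort hA.eigenvalues)) := by
  rw [eigValsDown, dif_pos hA]
  rfl

lemma eigValsDown_antitone (hA : A.IsHermitian) : Antitone (eigValsDown A) := by
  rw [hA.eigValsDown_eq_comp]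
  exact (Tuple.monotone_sort hA.eigenvalues).comp_antitone fun _ _ h => Fin.rev_le_rev.mpr h

lemma eigValsDown_eq_of_charpoly_eq (hA : A.IsHermitian) {f : Fin n → ℝ} (hf : Antitone f)
    (h : A.charpoly = ∏ i, (X - C (f i : 𝕜))) : eigValsDown A = f := by
  refine hA.eigValsDown_antitone.eq_of_map_univ_eq hf ?_
  have hroots : Finset.univ.val.map (RCLike.ofReal ∘ hA.eigenvalues : Fin n → 𝕜) =
      Finset.univ.val.map (RCLike.ofReal ∘ f) := by
    rw [← hA.roots_charpoly_eq_eigenvalues, h, roots_prod _ _ (by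
      simp [Finset.prod_ne_zero_iff, X_sub_C_ne_zero])]
    simp
  rw [← Multiset.map_map, ← Multiset.map_map] at hroots
  rw [hA.eigValsDown_eq_comp, ← Multiset.map_map, Multiset.map_univ_val_equiv,
    Multiset.map_injective (RCLike.ofReal_injective (K := 𝕜)) hroots]

lemma eigValsDown_eq_eigenvalues (hA : A.IsHermitian) :
    eigValsDown A =
      (isSymmetric_toEuclideanLin_iff.mpr hA).eigenvalues finrank_euclideanSpace_fin := by
  refine hA.eigValsDown_eq_of_charpoly_eq (LinearMap.IsSymmetric.eigenvalues_antitone ..) ?_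
  rw [← LinearMap.IsSymmetric.charpoly_eq, toEuclideanLin, toLpLin_eq_toLin, charpoly_toLin]

lemma eigValsDown_cfc (hA : A.IsHermitian) {f : ℝ → ℝ} (hf : MonotoneOn f (spectrum ℝ A)) :
    eigValsDown (cfc f A) = f ∘ eigValsDown A := by
  have hmem : ∀ i, eigValsDown A i ∈ spectrum ℝ A := fun i => by
    rw [hA.eigValsDown_eq_comp]
    exact hA.eigenvalues_mem_spectrum_real _
  have hfA : (cfc f A).IsHermitian := cfc_predicate f A
  refine hfA.eigValsDown_eq_of_charpoly_eq
    (fun i j hij => hf (hmem j) (hmem i) (hA.eigValsDown_antitone hij)) ?_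
  rw [hA.charpoly_cfc_eq, hA.eigValsDown_eq_comp]
  exact (Equiv.prod_comp _ fun i => X - C (f (hA.eigenvalues i) : 𝕜)).symm

end IsHermitian

namespace PosSemidef

lemma eigValsDown_nonneg (hA : A.PosSemidef) (j : Fin n) : 0 ≤ eigValsDown A j := by
  rw [hA.isHermitian.eigValsDown_eq_comp]
  exact hA.eigenvalues_nonneg _

lemma eigValsDown_conjTranspose_mul_mul_le {K : Matrix (Fin n) (Fin n) 𝕜} (hA : A.PosSemidef)
    (hK : IsUnit K) (hK_le : ∀ x, ‖toEuclideanLin K x‖ ≤ ‖x‖) (j : Fin n) :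
    eigValsDown (Kᴴ * A * K) j ≤ eigValsDown A j := by
  rw [(hA.conjTranspose_mul_mul_same K).isHermitian.eigValsDown_eq_eigenvalues,
    hA.isHermitian.eigValsDown_eq_eigenvalues]
  refine LinearMap.IsSymmetric.eigenvalues_le_of_eq_adjoint_comp _ _
    (isPositive_toEuclideanLin_iff.mpr hA) ?_ hK_le ?_ j
  · exact ((Module.End.isUnit_iff _).mp (hK.map (toLpLinAlgEquiv 2))).injective
  · rw [toLpLin_mul_same, toLpLin_mul_same, ← toEuclideanLin_conjTranspose_eq_adjoint,
      LinearMap.comp_assoc]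

lemma one_sub_inv_add_one_eq_cfc (hA : A.PosSemidef) :
    1 - (A + 1)⁻¹ = cfc (fun r : ℝ => 1 - (r + 1)⁻¹) A := by
  have hspec : ∀ r ∈ spectrum ℝ A, r + 1 ≠ 0 := fun r hr => by
    have := spectrum_nonneg_of_nonneg hA.nonneg hr
    positivity
  have hcont : ∀ f : ℝ → ℝ, ContinuousOn f (spectrum ℝ A) := fun f =>
    A.finite_real_spectrum.continuousOn f
  rw [cfc_sub _ _ A (hcont _) (hcont _), cfc_const_one ℝ A, cfc_inv _ A hspec (hcont _),
    cfc_add_const (1 : ℝ) (fun r => r) A (hcont _), cfc_id' ℝ A, map_one,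
    nonsing_inv_eq_ringInverse]

lemma one_sub_inv_add_one (hA : A.PosSemidef) : (1 - (A + 1)⁻¹).PosSemidef := by
  rw [hA.one_sub_inv_add_one_eq_cfc, ← nonneg_iff_posSemidef]
  refine cfc_nonneg fun r hr => ?_
  have : 0 ≤ r := spectrum_nonneg_of_nonneg hA.nonneg hr
  rw [sub_nonneg]
  exact inv_le_one_of_one_le₀ (by linarith)

lemma eigValsDown_one_sub_inv_add_one (hA : A.PosSemidef) :
    eigValsDown (1 - (A + 1)⁻¹) = (fun r : ℝ => 1 - (r + 1)⁻¹) ∘ eigValsDown A := by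
  rw [hA.one_sub_inv_add_one_eq_cfc]
  refine hA.isHermitian.eigValsDown_cfc fun a ha b _ hab => ?_
  have : 0 ≤ a := spectrum_nonneg_of_nonneg hA.nonneg ha
  gcongr

end PosSemidef

end Matrix

/-- from Lemma X.1.4 of Bhatia: for PSD `X, Y`,
`λ_j↓((X + I)⁻¹ - (X + Y + I)⁻¹) ≤ λ_j↓(I - (Y + I)⁻¹)` for every `j`. -/
theorem stmt10 {n : ℕ} (X Y : Matrix (Fin n) (Fin n) ℂ)
    (hX : X.PosSemidef) (hY : Y.PosSemidef) (j : Fin n) :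
    eigValsDown ((X + 1)⁻¹ - (X + Y + 1)⁻¹) j ≤ eigValsDown (1 - (Y + 1)⁻¹) j := by
  obtain ⟨C, hC, hCu, hCC⟩ :=
    (PosDef.posSemidef_add hX PosDef.one).exists_isUnit_posSemidef_mul_self_eq
  set K := C⁻¹
  have hK : Kᴴ = K := hC.isHermitian.inv
  have hKu : IsUnit K := isUnit_nonsing_inv_iff.mpr hCu
  have hK_le : ∀ x, ‖toEuclideanLin K x‖ ≤ ‖x‖ :=
    norm_toEuclideanLin_inv_le hCu (by rwa [hC.isHermitian.eq, hCC, add_sub_cancel_right])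
  have hZ : (K * Y * K).PosSemidef := by simpa only [hK] using hY.conjTranspose_mul_mul_same K
  have hZY : eigValsDown (K * Y * K) j ≤ eigValsDown Y j := by
    simpa only [hK] using hY.eigValsDown_conjTranspose_mul_mul_le hKu hK_le j
  rw [add_right_comm, inv_sub_inv_add_eq_mul_mul hCu hCC, hY.eigValsDown_one_sub_inv_add_one]
  calc eigValsDown (K * (1 - (K * Y * K + 1)⁻¹) * K) j
      ≤ eigValsDown (1 - (K * Y * K + 1)⁻¹) j := by
        simpa only [hK] using
          hZ.one_sub_inv_add_one.eigValsDown_conjTranspose_mul_mul_le hKu hK_le j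
    _ = 1 - (eigValsDown (K * Y * K) j + 1)⁻¹ := by
        rw [hZ.eigValsDown_one_sub_inv_add_one, Function.comp_apply]
    _ ≤ 1 - (eigValsDown Y j + 1)⁻¹ := by
        have := hZ.eigValsDown_nonneg j
        gcongr
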